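/- Integral representation of the mass excess function: for all t, β > 0 and every x ∈ ℝ³ \ {0}, (1/(4πβ|x|)) · [ e^{−4πβ|x| + 16π²β²t} · erfc(|x|/(2√t) − 4πβ√t) − erfc(|x|/(2√t)) ] = (1/(4πβ|x|√(πt))) · ∫₀^∞ (e^{4πβw} − 1) · e^{−(|x|+w)²/(4t)} dw. -/
import Mathlib


open MeasureTheory Real
open scoped Classical

noncomputable section

abbrev E3 : Type := EuclideanSpace ℝ (Fin 3)

/-- Radial three-dimensional free heat kernel `P_t(r) = (4πt)^{-3/2} exp(-r²/(4t))`. -/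
def heatR (t r : ℝ) : ℝ :=
  (4 * π * t) ^ (-(3 : ℝ) / 2) * Real.exp (-r ^ 2 / (4 * t))

/-- Three-dimensional free heat kernel `P_t(x,y) = (4πt)^{-3/2} exp(-|x-y|²/(4t))`. -/
def heatK (t : ℝ) (x y : E3) : ℝ :=
  (4 * π * t) ^ (-(3 : ℝ) / 2) * Real.exp (-‖x - y‖ ^ 2 / (4 * t))

/-- Three-dimensional attractive point interaction heat kernel `P_t^β(x,y)`. -/
def Pbeta (β t : ℝ) (x y : E3) : ℝ :=
  heatK t x y + 2 * t / (‖x‖ * ‖y‖) * heatR t (‖x‖ + ‖y‖)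
    + 8 * π * β * t / (‖x‖ * ‖y‖) *
        ∫ u in Set.Ioi (0 : ℝ), Real.exp (4 * π * β * u) * heatR t (u + ‖x‖ + ‖y‖)

/-- Mass excess function `Q_t^β(x)`, with `Q_0^β(x) := 0`. -/
def Qbeta (β t : ℝ) (x : E3) : ℝ :=
  if t = 0 then 0
  else
    (4 * π * β * ‖x‖ * Real.sqrt (π * t))⁻¹ *
      ∫ w in Set.Ioi (0 : ℝ),
        (Real.exp (4 * π * β * w) - 1) * Real.exp (-(‖x‖ + w) ^ 2 / (4 * t))

/-- Doob-transformed transition density `p_{s,t}^{T,β}(x,y)` (set to `0` at `y = 0`). -/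
def doobP (T β s t : ℝ) (x y : E3) : ℝ :=
  if y = 0 then 0
  else (1 + Qbeta β (T - t) y) / (1 + Qbeta β (T - s) x) * Pbeta β (t - s) x y

/-- Complementary error function `erfc(z) = (2/√π) ∫_z^∞ e^{-u²} du`. -/
def erfc (z : ℝ) : ℝ := 2 / Real.sqrt π * ∫ u in Set.Ioi z, Real.exp (-u ^ 2)


lemma integral_Ioi_comp_add_right' (g : ℝ → ℝ) (a c : ℝ) :
    ∫ x in Set.Ioi a, g (x + c) = ∫ x in Set.Ioi (a + c), g x := by
  rw [← integral_indicator measurableSet_Ioi, ← integral_indicator measurableSet_Ioi,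
    ← integral_add_right_eq_self (Set.indicator (Set.Ioi (a + c)) g) c]
  congr 1
  ext x
  simp [Set.indicator_apply, Set.mem_Ioi]

lemma integrable_gauss_shift {t : ℝ} (ht : 0 < t) (d : ℝ) :
    Integrable (fun w : ℝ => Real.exp (-(1/(4*t)) * (w + d)^2)) :=
  ((measurePreserving_add_right volume d).integrable_comp_emb
    (measurableEmbedding_addRight d)).mpr (integrable_exp_neg_mul_sq (by positivity))

def erfc' (z : ℝ) : ℝ := 2 / Real.sqrt π * ∫ u in Set.Ioi z, Real.exp (-u ^ 2)

theorem mass_excess_integral_rep' (t β : ℝ) (ht : 0 < t) (hβ : 0 < β)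
    (r : ℝ) (hr : 0 < r) :
    1 / (4 * π * β * r) *
        (Real.exp (-(4 * π * β * r) + 16 * π ^ 2 * β ^ 2 * t)
            * erfc' (r / (2 * Real.sqrt t) - 4 * π * β * Real.sqrt t)
          - erfc' (r / (2 * Real.sqrt t)))
      = 1 / (4 * π * β * r * Real.sqrt (π * t)) *
          ∫ w in Set.Ioi (0 : ℝ),
            (Real.exp (4 * π * β * w) - 1) * Real.exp (-(r + w) ^ 2 / (4 * t)) := by
  set a : ℝ := 4 * π * β with ha_def
  have ha : 0 < a := by have := pi_pos; positivity
  set s : ℝ := Real.sqrt t with hs_def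
  have hs : 0 < s := Real.sqrt_pos.mpr ht
  have hs2 : s ^ 2 = t := Real.sq_sqrt ht.le
  have hsπ : (0:ℝ) < Real.sqrt π := Real.sqrt_pos.mpr pi_pos
  set c1 : ℝ := r / (2 * s) with hc1
  set c2 : ℝ := c1 - a * s with hc2
  -- integrability
  have hint0 : IntegrableOn (fun w => Real.exp (-(r + w) ^ 2 / (4 * t))) (Set.Ioi 0) := by
    refine ((integrable_gauss_shift ht r).congr ?_).integrableOn
    filter_upwards with w
    congr 1
    field_simp
    ring
  have hint1 : IntegrableOn
      (fun w => Real.exp (a * w) * Real.exp (-(r + w) ^ 2 / (4 * t))) (Set.Ioi 0) := by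
    refine (((integrable_gauss_shift ht (r - 2 * t * a)).const_mul
      (Real.exp (a ^ 2 * t - a * r))).congr ?_).integrableOn
    filter_upwards with w
    rw [← Real.exp_add, ← Real.exp_add]
    congr 1
    field_simp
    ring
  -- second integral
  have I2 : (∫ w in Set.Ioi (0:ℝ), Real.exp (-(r + w) ^ 2 / (4 * t)))
      = (2 * s) * ∫ u in Set.Ioi c1, Real.exp (-u ^ 2) := by
    have step1 : (∫ w in Set.Ioi (0:ℝ), Real.exp (-(r + w) ^ 2 / (4 * t)))
        = ∫ w in Set.Ioi (0:ℝ), (fun v => Real.exp (-(v * (2*s)⁻¹) ^ 2)) (w + r) := by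
      refine setIntegral_congr_fun measurableSet_Ioi fun w _ => ?_
      simp only
      congr 1
      rw [← hs2]
      field_simp
      ring
    rw [step1, integral_Ioi_comp_add_right' (fun v => Real.exp (-(v * (2*s)⁻¹) ^ 2)) 0 r, zero_add,
      integral_comp_mul_right_Ioi (fun u => Real.exp (-u ^ 2)) r
        (inv_pos.mpr (by positivity) : (0:ℝ) < (2*s)⁻¹)]
    rw [smul_eq_mul, inv_inv, show r * (2*s)⁻¹ = c1 by rw [hc1, div_eq_mul_inv]]
  -- first integral
  have I1 : (∫ w in Set.Ioi (0:ℝ), Real.exp (a * w) * Real.exp (-(r + w) ^ 2 / (4 * t)))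
      = Real.exp (-(a * r) + a ^ 2 * t) *
          ((2 * s) * ∫ u in Set.Ioi c2, Real.exp (-u ^ 2)) := by
    have step1 : (∫ w in Set.Ioi (0:ℝ), Real.exp (a * w) * Real.exp (-(r + w) ^ 2 / (4 * t)))
        = ∫ w in Set.Ioi (0:ℝ), Real.exp (-(a * r) + a ^ 2 * t) *
            (fun v => Real.exp (-(v * (2*s)⁻¹ - a * s) ^ 2)) (w + r) := by
      refine setIntegral_congr_fun measurableSet_Ioi fun w _ => ?_
      simp only
      rw [← Real.exp_add, ← Real.exp_add]
      congr 1
      rw [← hs2]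
      field_simp
      ring
    rw [step1, MeasureTheory.integral_const_mul]
    congr 1
    rw [integral_Ioi_comp_add_right' (fun v => Real.exp (-(v * (2*s)⁻¹ - a * s) ^ 2)) 0 r, zero_add,
      integral_comp_mul_right_Ioi (fun v => Real.exp (-(v - a * s) ^ 2)) r
        (inv_pos.mpr (by positivity) : (0:ℝ) < (2*s)⁻¹)]
    rw [smul_eq_mul, inv_inv]
    congr 1
    have : (∫ v in Set.Ioi (r * (2*s)⁻¹), Real.exp (-(v - a * s) ^ 2))
        = ∫ v in Set.Ioi (r * (2*s)⁻¹), (fun u => Real.exp (-u ^ 2)) (v + -(a * s)) := by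
      refine setIntegral_congr_fun measurableSet_Ioi fun v _ => ?_
      simp [sub_eq_add_neg]
    rw [this, integral_Ioi_comp_add_right' (fun u => Real.exp (-u ^ 2)) (r * (2*s)⁻¹) (-(a * s)),
      show r * (2*s)⁻¹ + -(a * s) = c2 by rw [hc2, hc1, div_eq_mul_inv, sub_eq_add_neg]]
  -- split the RHS integral
  have split : (∫ w in Set.Ioi (0:ℝ),
        (Real.exp (a * w) - 1) * Real.exp (-(r + w) ^ 2 / (4 * t)))
      = (∫ w in Set.Ioi (0:ℝ), Real.exp (a * w) * Real.exp (-(r + w) ^ 2 / (4 * t)))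
        - ∫ w in Set.Ioi (0:ℝ), Real.exp (-(r + w) ^ 2 / (4 * t)) := by
    rw [← integral_sub hint1 hint0]
    refine setIntegral_congr_fun measurableSet_Ioi fun w _ => ?_
    ring
  have hsqrtπt : Real.sqrt (π * t) = Real.sqrt π * s := Real.sqrt_mul pi_pos.le t
  rw [show (16:ℝ) * π ^ 2 * β ^ 2 * t = a ^ 2 * t by rw [ha_def]; ring,
    split, I1, I2, erfc', erfc', hsqrtπt]
  have har : (0:ℝ) < a * r := by positivity
  field_simp

theorem mass_excess_integral_rep (t β : ℝ) (ht : 0 < t) (hβ : 0 < β)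
    (x : E3) (hx : x ≠ 0) :
    1 / (4 * π * β * ‖x‖) *
        (Real.exp (-(4 * π * β * ‖x‖) + 16 * π ^ 2 * β ^ 2 * t)
            * erfc (‖x‖ / (2 * Real.sqrt t) - 4 * π * β * Real.sqrt t)
          - erfc (‖x‖ / (2 * Real.sqrt t)))
      = 1 / (4 * π * β * ‖x‖ * Real.sqrt (π * t)) *
          ∫ w in Set.Ioi (0 : ℝ),
            (Real.exp (4 * π * β * w) - 1) * Real.exp (-(‖x‖ + w) ^ 2 / (4 * t)) := by
  have hr : 0 < ‖x‖ := norm_pos_iff.mpr hx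
  simpa [erfc, erfc'] using mass_excess_integral_rep' t β ht hβ ‖x‖ hr


end
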